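/- For a real symmetric N×N matrix C and a vector v ∈ ℝ^N, define M(C, v) := (1/3)‖v‖²·[2·tr((tr(C)·I − C)·C²) − 2·S₂(C)·tr(C)] − 2⟨(tr(C)·I − C)·C v, C v⟩ + 2·S₂(C)·⟨C v, v⟩. Then for every real symmetric N×N matrix A, every v ∈ ℝ^N, and all scalars α, β ∈ ℝ, one has the identity M(α·A + β·(v ⊗ v), v) = α³·M(A, v). -/

import Mathlib

/-! `Mfun C v` is a homogeneous cubic in `C`, so it suffices to show that it does not change
under `C ↦ C + β • v ⊗ v` for symmetric `C` (applied to `C = α • A`). It depends on `C` only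
through `tr C`, `tr C²`, `tr C³` and `⟨C v, v⟩`, `⟨C v, C v⟩`, `⟨C² v, C v⟩`; for
`C = A + β • v ⊗ v` each of these is a polynomial in `β` whose coefficients are traces of powers
of `A`, `‖v‖²` and `⟨Aᵏ v, v⟩`, and the terms involving `β` cancel. -/

open Matrix

/-- `S₂(M) := (1/2)[(tr M)² − tr(M²)]`. -/
noncomputable def S2 {N : ℕ} (M : Matrix (Fin N) (Fin N) ℝ) : ℝ :=
  (1 / 2) * (M.trace ^ 2 - (M * M).trace)

/-- `M(C, v) := (1/3)‖v‖²·[2·tr((tr(C)·I − C)·C²) − 2·S₂(C)·tr(C)]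
  − 2⟨(tr(C)·I − C)·C v, C v⟩ + 2·S₂(C)·⟨C v, v⟩`. -/
noncomputable def Mfun {N : ℕ} (C : Matrix (Fin N) (Fin N) ℝ) (v : Fin N → ℝ) : ℝ :=
  (1 / 3) * (v ⬝ᵥ v) *
      (2 * ((C.trace • (1 : Matrix (Fin N) (Fin N) ℝ) - C) * (C * C)).trace
        - 2 * S2 C * C.trace)
    - 2 * (((C.trace • (1 : Matrix (Fin N) (Fin N) ℝ) - C) *ᵥ (C *ᵥ v)) ⬝ᵥ (C *ᵥ v))
    + 2 * S2 C * ((C *ᵥ v) ⬝ᵥ v)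

namespace Matrix

variable {n R : Type*} [Fintype n] [CommRing R]

theorem IsSymm.mulVec_dotProduct {A : Matrix n n R} (hA : A.IsSymm) (x y : n → R) :
    A *ᵥ x ⬝ᵥ y = x ⬝ᵥ A *ᵥ y := by
  rw [dotProduct_mulVec, ← mulVec_transpose, hA.eq, dotProduct_comm]

variable (A : Matrix n n R) (β : R) (v : n → R)

theorem add_smul_vecMulVec_self_mulVec (x : n → R) :
    (A + β • vecMulVec v v) *ᵥ x = A *ᵥ x + (β * (v ⬝ᵥ x)) • v := by
  rw [add_mulVec, smul_mulVec, vecMulVec_mulVec, op_smul_eq_smul, smul_smul]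

theorem trace_add_smul_vecMulVec_self :
    (A + β • vecMulVec v v).trace = A.trace + β * (v ⬝ᵥ v) := by
  rw [trace_add, trace_smul, trace_vecMulVec, smul_eq_mul]

theorem trace_sq_add_smul_vecMulVec_self :
    ((A + β • vecMulVec v v) * (A + β • vecMulVec v v)).trace
      = (A * A).trace + 2 * β * (A *ᵥ v ⬝ᵥ v) + β ^ 2 * (v ⬝ᵥ v) ^ 2 := by
  simp only [add_mul, mul_add, smul_mul_assoc, mul_smul_comm, mul_vecMulVec, trace_add, trace_smul,
    trace_vecMulVec, vecMulVec_mulVec, op_smul_eq_smul, smul_dotProduct, smul_eq_mul,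
    trace_mul_comm (vecMulVec v v) A]
  ring

theorem trace_cube_add_smul_vecMulVec_self :
    ((A + β • vecMulVec v v) * ((A + β • vecMulVec v v) * (A + β • vecMulVec v v))).trace
      = (A * (A * A)).trace + 3 * β * (A *ᵥ (A *ᵥ v) ⬝ᵥ v)
        + 3 * β ^ 2 * (v ⬝ᵥ v) * (A *ᵥ v ⬝ᵥ v) + β ^ 3 * (v ⬝ᵥ v) ^ 3 := by
  simp only [add_mul, mul_add, smul_mul_assoc, mul_smul_comm, mul_vecMulVec, vecMulVec_mul,
    trace_add, trace_smul, trace_vecMulVec, vecMulVec_mulVec, op_smul_eq_smul, smul_dotProduct,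
    dotProduct_smul, mulVec_smul, smul_eq_mul, ← vecMul_vecMul, dotProduct_comm _ (_ ᵥ* _),
    ← dotProduct_mulVec, dotProduct_comm v (A *ᵥ _)]
  ring

end Matrix

section

variable {N : ℕ}

theorem Mfun_eq (C : Matrix (Fin N) (Fin N) ℝ) (v : Fin N → ℝ) :
    Mfun C v =
      (1 / 3) * (v ⬝ᵥ v) * (3 * C.trace * (C * C).trace - 2 * (C * (C * C)).trace - C.trace ^ 3)
      - 2 * C.trace * (C *ᵥ v ⬝ᵥ C *ᵥ v) + 2 * (C *ᵥ (C *ᵥ v) ⬝ᵥ C *ᵥ v)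
      + (C.trace ^ 2 - (C * C).trace) * (C *ᵥ v ⬝ᵥ v) := by
  simp only [Mfun, S2, sub_mul, smul_mul_assoc, one_mul, trace_sub, trace_smul, sub_mulVec,
    smul_mulVec, one_mulVec, sub_dotProduct, smul_dotProduct, smul_eq_mul]
  ring

theorem Mfun_smul (c : ℝ) (C : Matrix (Fin N) (Fin N) ℝ) (v : Fin N → ℝ) :
    Mfun (c • C) v = c ^ 3 * Mfun C v := by
  simp only [Mfun_eq, trace_smul, smul_mul_assoc, mul_smul_comm, smul_mulVec, mulVec_smul,
    smul_dotProduct, dotProduct_smul, smul_eq_mul]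
  ring

theorem Mfun_add_smul_vecMulVec_self {A : Matrix (Fin N) (Fin N) ℝ} (hA : A.IsSymm) (β : ℝ)
    (v : Fin N → ℝ) : Mfun (A + β • vecMulVec v v) v = Mfun A v := by
  rw [Mfun_eq, Mfun_eq, trace_add_smul_vecMulVec_self, trace_sq_add_smul_vecMulVec_self,
    trace_cube_add_smul_vecMulVec_self]
  simp only [add_smul_vecMulVec_self_mulVec, mulVec_add, mulVec_smul, dotProduct_add,
    add_dotProduct, smul_dotProduct, dotProduct_smul, smul_eq_mul, hA.mulVec_dotProduct]
  ring

end

/-- For every real symmetric `N × N` matrix `A`, every `v ∈ ℝ^N` and all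
scalars `α, β ∈ ℝ`, one has `M(α A + β (v ⊗ v), v) = α³ M(A, v)`. -/
theorem Mfun_rank_one_perturbation {N : ℕ}
    (A : Matrix (Fin N) (Fin N) ℝ) (hA : A.IsSymm) (v : Fin N → ℝ) (α β : ℝ) :
    Mfun (α • A + β • Matrix.vecMulVec v v) v = α ^ 3 * Mfun A v := by
  rw [Mfun_add_smul_vecMulVec_self (hA.smul α), Mfun_smul]
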